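/- (Theorem 3.1(ii)) Assume there exists a Hermitian X_P with R_{X_P} positive definite and X_P ≤ R(X_P), and there exists a Hermitian matrix in dom(R) with ρ(T̂) < 1. Let X_0 ∈ S_≥ and X_{k+1} := R(X_k). Then for all k ≥ 0 and every Hermitian X_P with R_{X_P} positive definite and X_P ≤ R(X_P), one has X_k ≥ X_{k+1} ≥ X_P (Loewner order); i.e., the sequence is nonincreasing and bounded below by every element of R_≤ ∩ ℙ. -/

import Mathlib

/-!
Completing the square around an arbitrary feedback `F_Y` gives
`R(X) = T_Yᴴ X̄ T_Y + H_Y - K(Y, X)`, where `K(Y, X) = (F_Y - F_X)ᴴ R_X (F_Y - F_X) ⪰ 0` as soon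
as `R_X ⪰ 0`. With `Y = X` this makes `R` monotone on `{X | R_X ≻ 0}`, which contains every
matrix lying above an element of `R_≤ ∩ ℙ`. With `Y = X_T`, the matrix witnessing `X₀ ∈ S_≥`,
it expresses both `C_{T_{X_T}}(X₀ - X_P)` and `X₀ - R(X₀)` as sums of positive semidefinite
terms. The conjugate Stein inequality (`C_T(W) ⪰ 0` and `ρ(T̄T) < 1` imply `W ⪰ 0`) reduces to
the ordinary one for `T̂ = T̄T`, where `W - (T̂ᵏ)ᴴ W T̂ᵏ ⪰ 0` for all `k` and `T̂ᵏ → 0` by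
Gelfand's formula. Hence `X₀ ⪰ X_P` and `X₀ ⪰ X₁`, and monotonicity of `R` carries both
inequalities along the iteration.
-/

open Matrix Filter Topology
open scoped ComplexOrder

noncomputable section

namespace CDARE

variable {n m : ℕ}

/-- Entrywise complex conjugate of a matrix. -/
def mconj {p q : ℕ} (M : Matrix (Fin p) (Fin q) ℂ) : Matrix (Fin p) (Fin q) ℂ :=
  M.map (starRingEnd ℂ)

/-- `hatM M = conj M * M`. -/
def hatM (M : Matrix (Fin n) (Fin n) ℂ) : Matrix (Fin n) (Fin n) ℂ := mconj M * M

/-- `R_X = R + Bᴴ X̄ B`. -/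
def RX (R : Matrix (Fin m) (Fin m) ℂ) (B : Matrix (Fin n) (Fin m) ℂ)
    (X : Matrix (Fin n) (Fin n) ℂ) : Matrix (Fin m) (Fin m) ℂ :=
  R + Bᴴ * mconj X * B

/-- `F_X = R_X⁻¹ Bᴴ X̄ A`. -/
def FX (A : Matrix (Fin n) (Fin n) ℂ) (B : Matrix (Fin n) (Fin m) ℂ)
    (R : Matrix (Fin m) (Fin m) ℂ) (X : Matrix (Fin n) (Fin n) ℂ) :
    Matrix (Fin m) (Fin n) ℂ :=
  (RX R B X)⁻¹ * (Bᴴ * mconj X * A)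

/-- `T_X = A - B F_X`. -/
def TX (A : Matrix (Fin n) (Fin n) ℂ) (B : Matrix (Fin n) (Fin m) ℂ)
    (R : Matrix (Fin m) (Fin m) ℂ) (X : Matrix (Fin n) (Fin n) ℂ) :
    Matrix (Fin n) (Fin n) ℂ :=
  A - B * FX A B R X

/-- The Riccati operator `R(X)`. -/
def Rop (A : Matrix (Fin n) (Fin n) ℂ) (B : Matrix (Fin n) (Fin m) ℂ)
    (R : Matrix (Fin m) (Fin m) ℂ) (H : Matrix (Fin n) (Fin n) ℂ)
    (X : Matrix (Fin n) (Fin n) ℂ) : Matrix (Fin n) (Fin n) ℂ :=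
  Aᴴ * mconj X * A - Aᴴ * mconj X * B * (RX R B X)⁻¹ * (Bᴴ * mconj X * A) + H

/-- `H_X = H + F_Xᴴ R F_X`. -/
def HX (A : Matrix (Fin n) (Fin n) ℂ) (B : Matrix (Fin n) (Fin m) ℂ)
    (R : Matrix (Fin m) (Fin m) ℂ) (H : Matrix (Fin n) (Fin n) ℂ)
    (X : Matrix (Fin n) (Fin n) ℂ) : Matrix (Fin n) (Fin n) ℂ :=
  H + (FX A B R X)ᴴ * R * FX A B R X

/-- `K(Y, X) = (F_Y - F_X)ᴴ R_X (F_Y - F_X)`. -/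
def Kop (A : Matrix (Fin n) (Fin n) ℂ) (B : Matrix (Fin n) (Fin m) ℂ)
    (R : Matrix (Fin m) (Fin m) ℂ) (Y X : Matrix (Fin n) (Fin n) ℂ) :
    Matrix (Fin n) (Fin n) ℂ :=
  (FX A B R Y - FX A B R X)ᴴ * RX R B X * (FX A B R Y - FX A B R X)

/-- Conjugate Stein operator `C_C(X) = X - Cᴴ X̄ C`. -/
def CStein (C X : Matrix (Fin n) (Fin n) ℂ) : Matrix (Fin n) (Fin n) ℂ :=
  X - Cᴴ * mconj X * C

/-- The set `S_≥`. -/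
def Sge (A : Matrix (Fin n) (Fin n) ℂ) (B : Matrix (Fin n) (Fin m) ℂ)
    (R : Matrix (Fin m) (Fin m) ℂ) (H : Matrix (Fin n) (Fin n) ℂ) :
    Set (Matrix (Fin n) (Fin n) ℂ) :=
  {X | X.IsHermitian ∧ ∃ XT : Matrix (Fin n) (Fin n) ℂ, XT.IsHermitian ∧
      IsUnit (RX R B XT) ∧ spectralRadius ℂ (hatM (TX A B R XT)) < 1 ∧
      (CStein (TX A B R XT) X - HX A B R H XT).PosSemidef}

open scoped ENNReal NNReal

theorem tendsto_pow_atTop_nhds_zero_of_spectralRadius_lt_one {𝔸 : Type*} [NormedRing 𝔸]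
    [NormedAlgebra ℂ 𝔸] [CompleteSpace 𝔸] {a : 𝔸} (h : spectralRadius ℂ a < 1) :
    Tendsto (fun k : ℕ => a ^ k) atTop (𝓝 0) := by
  obtain ⟨r, hρr, hr1⟩ := ENNReal.lt_iff_exists_nnreal_btwn.1 h
  rw [tendsto_zero_iff_norm_tendsto_zero]
  refine squeeze_zero' (.of_forall fun k => norm_nonneg _) ?_
    (tendsto_pow_atTop_nhds_zero_of_lt_one r.coe_nonneg (by exact_mod_cast hr1))
  filter_upwards [(spectrum.pow_nnnorm_pow_one_div_tendsto_nhds_spectralRadius a).eventually_lt_const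
    hρr, eventually_ge_atTop 1] with k hk hk1
  have hk0 : (k : ℝ) ≠ 0 := Nat.cast_ne_zero.2 (by omega)
  have : (‖a ^ k‖₊ : ℝ≥0∞) ≤ (r : ℝ≥0∞) ^ k :=
    calc (‖a ^ k‖₊ : ℝ≥0∞) = ((‖a ^ k‖₊ : ℝ≥0∞) ^ (1 / (k : ℝ))) ^ (k : ℝ) := by
          rw [← ENNReal.rpow_mul, one_div_mul_cancel hk0, ENNReal.rpow_one]
      _ ≤ (r : ℝ≥0∞) ^ (k : ℝ) := ENNReal.rpow_le_rpow hk.le (by positivity)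
      _ = (r : ℝ≥0∞) ^ k := ENNReal.rpow_natCast _ k
  exact_mod_cast this

theorem isClosed_setOf_posSemidef {ι : Type*} [Fintype ι] :
    IsClosed {W : Matrix ι ι ℂ | W.PosSemidef} := by
  have : {W : Matrix ι ι ℂ | W.PosSemidef} =
      {W | Wᴴ = W} ∩ ⋂ x : ι → ℂ, {W | 0 ≤ star x ⬝ᵥ (W *ᵥ x)} := by
    ext W
    simp [posSemidef_iff_dotProduct_mulVec, IsHermitian]
  rw [this]
  exact (isClosed_eq (by fun_prop) continuous_id).inter
    (isClosed_iInter fun x => isClosed_le continuous_const (by fun_prop))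

section Stein

attribute [local instance] Matrix.linftyOpNormedRing Matrix.linftyOpNormedAlgebra

theorem posSemidef_of_posSemidef_sub_conjTranspose_mul_mul {ι : Type*} [Fintype ι]
    [DecidableEq ι] {M W : Matrix ι ι ℂ} (hM : spectralRadius ℂ M < 1)
    (hW : (W - Mᴴ * W * M).PosSemidef) : W.PosSemidef := by
  have hpow : ∀ k : ℕ, (W - (M ^ k)ᴴ * W * M ^ k).PosSemidef := by
    intro k
    induction k with
    | zero => simpa using PosSemidef.zero
    | succ k ih =>
      have htelescope : W - (M ^ (k + 1))ᴴ * W * M ^ (k + 1) =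
          (W - Mᴴ * W * M) + Mᴴ * (W - (M ^ k)ᴴ * W * M ^ k) * M := by
        simp only [pow_succ, conjTranspose_mul, Matrix.mul_sub, Matrix.sub_mul, Matrix.mul_assoc]
        abel
      rw [htelescope]
      exact hW.add (ih.conjTranspose_mul_mul_same M)
  have hlim : Tendsto (fun k : ℕ => W - (M ^ k)ᴴ * W * M ^ k) atTop (𝓝 W) := by
    have hcont : Continuous fun N : Matrix ι ι ℂ => W - Nᴴ * W * N := by fun_prop
    have := (hcont.tendsto 0).comp (tendsto_pow_atTop_nhds_zero_of_spectralRadius_lt_one hM)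
    rwa [conjTranspose_zero, Matrix.zero_mul, Matrix.zero_mul, sub_zero] at this
  exact isClosed_setOf_posSemidef.mem_of_tendsto hlim (.of_forall hpow)

end Stein

lemma mconj_sub {p q : ℕ} (M N : Matrix (Fin p) (Fin q) ℂ) :
    mconj (M - N) = mconj M - mconj N := by
  ext i j; simp [mconj]

lemma mconj_mul {p q r : ℕ} (M : Matrix (Fin p) (Fin q) ℂ) (N : Matrix (Fin q) (Fin r) ℂ) :
    mconj (M * N) = mconj M * mconj N := by
  ext i j; simp [mconj, Matrix.mul_apply]

lemma mconj_mconj {p q : ℕ} (M : Matrix (Fin p) (Fin q) ℂ) : mconj (mconj M) = M := by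
  ext i j; simp [mconj]

lemma mconj_conjTranspose {p q : ℕ} (M : Matrix (Fin p) (Fin q) ℂ) : mconj Mᴴ = Mᵀ := by
  ext i j; simp [mconj]

lemma conjTranspose_mconj {p q : ℕ} (M : Matrix (Fin p) (Fin q) ℂ) : (mconj M)ᴴ = Mᵀ := by
  ext i j; simp [mconj]

lemma mconj_eq_transpose_of_isHermitian {X : Matrix (Fin n) (Fin n) ℂ} (hX : X.IsHermitian) :
    mconj X = Xᵀ := by
  rw [← mconj_conjTranspose, hX.eq]

lemma isHermitian_mconj {X : Matrix (Fin n) (Fin n) ℂ} (hX : X.IsHermitian) :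
    (mconj X).IsHermitian := by
  rw [IsHermitian, conjTranspose_mconj, mconj_eq_transpose_of_isHermitian hX]

lemma posSemidef_mconj {X : Matrix (Fin n) (Fin n) ℂ} (hX : X.PosSemidef) :
    (mconj X).PosSemidef := by
  rw [mconj_eq_transpose_of_isHermitian hX.1]
  exact hX.transpose

theorem posSemidef_of_posSemidef_CStein {T W : Matrix (Fin n) (Fin n) ℂ}
    (hT : spectralRadius ℂ (hatM T) < 1) (hW : (CStein T W).PosSemidef) : W.PosSemidef := by
  refine posSemidef_of_posSemidef_sub_conjTranspose_mul_mul hT ?_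
  have hsplit : W - (hatM T)ᴴ * W * hatM T = CStein T W + Tᴴ * mconj (CStein T W) * T := by
    simp only [CStein, hatM, mconj_sub, mconj_mul, mconj_conjTranspose, mconj_mconj,
      conjTranspose_mul, conjTranspose_mconj, Matrix.mul_sub, Matrix.sub_mul, Matrix.mul_assoc]
    abel
  rw [hsplit]
  exact hW.add ((posSemidef_mconj hW).conjTranspose_mul_mul_same T)

section Riccati

variable (A : Matrix (Fin n) (Fin n) ℂ) (B : Matrix (Fin n) (Fin m) ℂ)
  (R : Matrix (Fin m) (Fin m) ℂ) (H : Matrix (Fin n) (Fin n) ℂ)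

lemma isHermitian_RX (hR : R.IsHermitian) {X : Matrix (Fin n) (Fin n) ℂ}
    (hX : X.IsHermitian) : (RX R B X).IsHermitian :=
  hR.add (isHermitian_conjTranspose_mul_mul B (isHermitian_mconj hX))

lemma RX_mul_FX {X : Matrix (Fin n) (Fin n) ℂ} (hX : IsUnit (RX R B X)) :
    RX R B X * FX A B R X = Bᴴ * mconj X * A := by
  rw [FX, ← Matrix.mul_assoc, mul_nonsing_inv _ ((isUnit_iff_isUnit_det _).1 hX), Matrix.one_mul]

lemma conjTranspose_FX_mul_RX (hR : R.IsHermitian) {X : Matrix (Fin n) (Fin n) ℂ}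
    (hX : X.IsHermitian) (hRX : IsUnit (RX R B X)) :
    (FX A B R X)ᴴ * RX R B X = Aᴴ * mconj X * B := by
  have h := congrArg conjTranspose (RX_mul_FX A B R hRX)
  rwa [conjTranspose_mul, (isHermitian_RX B R hR hX).eq, conjTranspose_mul, conjTranspose_mul,
    conjTranspose_conjTranspose, (isHermitian_mconj hX).eq, ← Matrix.mul_assoc] at h

lemma Rop_eq_TX_add_HX_sub_Kop (hR : R.IsHermitian) {X : Matrix (Fin n) (Fin n) ℂ}
    (Y : Matrix (Fin n) (Fin n) ℂ) (hX : X.IsHermitian) (hRX : IsUnit (RX R B X)) :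
    Rop A B R H X = (TX A B R Y)ᴴ * mconj X * TX A B R Y + HX A B R H Y - Kop A B R Y X := by
  set S := RX R B X with hS
  set G := FX A B R X
  set F := FX A B R Y
  have hSG : Bᴴ * (mconj X * A) = S * G := by
    rw [← Matrix.mul_assoc]; exact (RX_mul_FX A B R hRX).symm
  have hGS : ∀ Z : Matrix (Fin m) (Fin n) ℂ, Aᴴ * (mconj X * (B * Z)) = Gᴴ * (S * Z) := by
    intro Z
    rw [← Matrix.mul_assoc, ← Matrix.mul_assoc, ← conjTranspose_FX_mul_RX A B R hR hX hRX,
      Matrix.mul_assoc]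
  have hBXB : ∀ Z : Matrix (Fin m) (Fin n) ℂ, Bᴴ * (mconj X * (B * Z)) = S * Z - R * Z := by
    intro Z
    rw [← Matrix.sub_mul, hS, RX, add_sub_cancel_left, Matrix.mul_assoc, Matrix.mul_assoc]
  have hSS : S * (S⁻¹ * (S * G)) = S * G := by
    rw [← Matrix.mul_assoc, mul_nonsing_inv _ ((isUnit_iff_isUnit_det _).1 hRX), Matrix.one_mul]
  simp only [Rop, TX, HX, Kop, ← hS, Matrix.sub_mul, Matrix.mul_sub, conjTranspose_sub,
    conjTranspose_mul, Matrix.mul_assoc]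
  rw [hSG, hGS, hGS, hBXB, hSS]
  simp only [Matrix.mul_sub]
  abel

lemma Kop_self (X : Matrix (Fin n) (Fin n) ℂ) : Kop A B R X X = 0 := by
  simp [Kop]

lemma posSemidef_Kop {X : Matrix (Fin n) (Fin n) ℂ} (Y : Matrix (Fin n) (Fin n) ℂ)
    (hRX : (RX R B X).PosSemidef) : (Kop A B R Y X).PosSemidef :=
  hRX.conjTranspose_mul_mul_same _

lemma RX_eq_RX_add (X Z : Matrix (Fin n) (Fin n) ℂ) :
    RX R B X = RX R B Z + Bᴴ * mconj (X - Z) * B := by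
  simp only [RX, mconj_sub, Matrix.mul_sub, Matrix.sub_mul]
  abel

lemma posDef_RX_of_posSemidef_sub {X Z : Matrix (Fin n) (Fin n) ℂ} (hZ : (RX R B Z).PosDef)
    (hXZ : (X - Z).PosSemidef) : (RX R B X).PosDef := by
  rw [RX_eq_RX_add B R X Z]
  exact hZ.add_posSemidef ((posSemidef_mconj hXZ).conjTranspose_mul_mul_same B)

lemma isHermitian_of_posSemidef_sub {X Z : Matrix (Fin n) (Fin n) ℂ} (hZ : Z.IsHermitian)
    (hXZ : (X - Z).PosSemidef) : X.IsHermitian := by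
  simpa using hXZ.1.add hZ

theorem posSemidef_Rop_sub_Rop (hR : R.IsHermitian) {X Z : Matrix (Fin n) (Fin n) ℂ}
    (hZ : Z.IsHermitian) (hRZ : (RX R B Z).PosDef) (hXZ : (X - Z).PosSemidef) :
    (Rop A B R H X - Rop A B R H Z).PosSemidef := by
  have hX := isHermitian_of_posSemidef_sub hZ hXZ
  have hRX := posDef_RX_of_posSemidef_sub B R hRZ hXZ
  have hsplit : Rop A B R H X - Rop A B R H Z =
      (TX A B R X)ᴴ * mconj (X - Z) * TX A B R X + Kop A B R X Z := by
    rw [Rop_eq_TX_add_HX_sub_Kop A B R H hR X hX hRX.isUnit,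
      Rop_eq_TX_add_HX_sub_Kop A B R H hR X hZ hRZ.isUnit, Kop_self, mconj_sub]
    simp only [Matrix.mul_sub, Matrix.sub_mul]
    abel
  rw [hsplit]
  exact ((posSemidef_mconj hXZ).conjTranspose_mul_mul_same _).add
    (posSemidef_Kop A B R X hRZ.posSemidef)

/-- Membership in `R_≤ ∩ ℙ`. -/
def IsPosSubsolution (X : Matrix (Fin n) (Fin n) ℂ) : Prop :=
  X.IsHermitian ∧ (RX R B X).PosDef ∧ (Rop A B R H X - X).PosSemidef

theorem posSemidef_Rop_sub_of_posSemidef_sub (hR : R.IsHermitian)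
    {X XP : Matrix (Fin n) (Fin n) ℂ} (hXP : IsPosSubsolution A B R H XP)
    (hX : (X - XP).PosSemidef) : (Rop A B R H X - XP).PosSemidef := by
  rw [← sub_add_sub_cancel _ (Rop A B R H XP)]
  exact (posSemidef_Rop_sub_Rop A B R H hR hXP.1 hXP.2.1 hX).add hXP.2.2

theorem posSemidef_sub_of_mem_Sge (hR : R.IsHermitian) {X XP : Matrix (Fin n) (Fin n) ℂ}
    (hX : X ∈ Sge A B R H) (hXP : IsPosSubsolution A B R H XP) : (X - XP).PosSemidef := by
  obtain ⟨-, XT, -, -, hρ, hstein⟩ := hX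
  obtain ⟨hXPh, hRXP, hXP_le⟩ := hXP
  refine posSemidef_of_posSemidef_CStein hρ ?_
  have hsplit : CStein (TX A B R XT) (X - XP) =
      (CStein (TX A B R XT) X - HX A B R H XT) + (Rop A B R H XP - XP) + Kop A B R XT XP := by
    rw [Rop_eq_TX_add_HX_sub_Kop A B R H hR XT hXPh hRXP.isUnit]
    simp only [CStein, mconj_sub, Matrix.mul_sub, Matrix.sub_mul]
    abel
  rw [hsplit]
  exact (hstein.add hXP_le).add (posSemidef_Kop A B R XT hRXP.posSemidef)

theorem posSemidef_sub_Rop_of_mem_Sge (hR : R.IsHermitian) {X : Matrix (Fin n) (Fin n) ℂ}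
    (hX : X ∈ Sge A B R H) (hRX : (RX R B X).PosDef) : (X - Rop A B R H X).PosSemidef := by
  obtain ⟨hXh, XT, -, -, -, hstein⟩ := hX
  have hsplit : X - Rop A B R H X =
      (CStein (TX A B R XT) X - HX A B R H XT) + Kop A B R XT X := by
    rw [Rop_eq_TX_add_HX_sub_Kop A B R H hR XT hXh hRX.isUnit, CStein]
    abel
  rw [hsplit]
  exact hstein.add (posSemidef_Kop A B R XT hRX.posSemidef)

end Riccati

theorem theorem_3_1_ii_general (n m : ℕ) (A : Matrix (Fin n) (Fin n) ℂ) (B : Matrix (Fin n) (Fin m) ℂ)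
    (R : Matrix (Fin m) (Fin m) ℂ) (H : Matrix (Fin n) (Fin n) ℂ)
    (hR : R.IsHermitian)
    (hP : ∃ XP : Matrix (Fin n) (Fin n) ℂ, XP.IsHermitian ∧ (RX R B XP).PosDef ∧
      (Rop A B R H XP - XP).PosSemidef)
    (X : ℕ → Matrix (Fin n) (Fin n) ℂ)
    (hX0 : X 0 ∈ Sge A B R H)
    (hrec : ∀ k : ℕ, X (k + 1) = Rop A B R H (X k)) :
    ∀ k : ℕ, (X k - X (k + 1)).PosSemidef ∧
      ∀ XP : Matrix (Fin n) (Fin n) ℂ, XP.IsHermitian → (RX R B XP).PosDef →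
        (Rop A B R H XP - XP).PosSemidef → (X (k + 1) - XP).PosSemidef := by
  obtain ⟨P, hP⟩ := hP
  have hlower : ∀ k XP, IsPosSubsolution A B R H XP → (X k - XP).PosSemidef := by
    intro k XP hXP
    induction k with
    | zero => exact posSemidef_sub_of_mem_Sge A B R H hR hX0 hXP
    | succ k ih => rw [hrec]; exact posSemidef_Rop_sub_of_posSemidef_sub A B R H hR hXP ih
  refine fun k => ⟨?_, fun XP hXPh hRXP hXP_le => hlower (k + 1) XP ⟨hXPh, hRXP, hXP_le⟩⟩
  have hRX : ∀ k, (RX R B (X k)).PosDef := fun k =>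
    posDef_RX_of_posSemidef_sub B R hP.2.1 (hlower k P hP)
  induction k with
  | zero => rw [hrec]; exact posSemidef_sub_Rop_of_mem_Sge A B R H hR hX0 (hRX 0)
  | succ k ih =>
    have hXk1 := isHermitian_of_posSemidef_sub hP.1 (hlower (k + 1) P hP)
    simpa only [← hrec] using posSemidef_Rop_sub_Rop A B R H hR hXk1 (hRX (k + 1)) ih

/-- Theorem 3.1(ii): the fixed-point iterates are nonincreasing and bounded below by every
element of `R_≤ ∩ ℙ`. -/
theorem theorem_3_1_ii (n m : ℕ) (A : Matrix (Fin n) (Fin n) ℂ) (B : Matrix (Fin n) (Fin m) ℂ)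
    (R : Matrix (Fin m) (Fin m) ℂ) (H : Matrix (Fin n) (Fin n) ℂ)
    (hR : R.IsHermitian) (hRunit : IsUnit R) (hH : H.IsHermitian)
    (hP : ∃ XP : Matrix (Fin n) (Fin n) ℂ, XP.IsHermitian ∧ (RX R B XP).PosDef ∧
      (Rop A B R H XP - XP).PosSemidef)
    (hT : ∃ XT : Matrix (Fin n) (Fin n) ℂ, XT.IsHermitian ∧ IsUnit (RX R B XT) ∧
      spectralRadius ℂ (hatM (TX A B R XT)) < 1)
    (X : ℕ → Matrix (Fin n) (Fin n) ℂ)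
    (hX0 : X 0 ∈ Sge A B R H)
    (hrec : ∀ k : ℕ, X (k + 1) = Rop A B R H (X k)) :
    ∀ k : ℕ, (X k - X (k + 1)).PosSemidef ∧
      ∀ XP : Matrix (Fin n) (Fin n) ℂ, XP.IsHermitian → (RX R B XP).PosDef →
        (Rop A B R H XP - XP).PosSemidef → (X (k + 1) - XP).PosSemidef :=
  theorem_3_1_ii_general n m A B R H hR hP X hX0 hrec

end CDARE
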